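/- arXiv:1511.05118 — 5 statements merged into one kernel-verified Lean document; each statement's English description precedes it below -/
import Mathlib

section
/- (Standard decoder, lower bound / worst-case noise.) Fix indices ω_1,…,ω_m ∈ {1,…,n}, the associated sampling matrix M and P_Ω = diag(p_{ω_1},…,p_{ω_m}), and suppose the upper RIP bound holds: (1/m)‖M P^{−1/2} x‖₂² ≤ (1+δ)‖x‖₂² for all x ∈ span(U_k), for some δ ∈ (0,1). Then for every x ∈ span(U_k) and every z₀ ∈ span(U_k), setting the noise vector w₀ := M z₀ and y := M x + w₀, the vector x* := x + z₀ is a minimizer of ‖P_Ω^{−1/2}(M z − y)‖₂ over z ∈ span(U_k) and satisfies ‖x* − x‖₂ ≥ (1/√(m(1+δ)))‖P_Ω^{−1/2} w₀‖₂. -/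
open Matrix

/-- Euclidean norm of a finite real vector. -/
noncomputable def norm2 {d : ℕ} (x : Fin d → ℝ) : ℝ := Real.sqrt (∑ j, x j ^ 2)

/-- The sampling matrix `M ∈ ℝ^{m×n}` associated to fixed indices `ω`. -/
def sampMat {n m : ℕ} (ω : Fin m → Fin n) : Matrix (Fin m) (Fin n) ℝ :=
  Matrix.of fun i j => if j = ω i then 1 else 0

/-- `P^{-1/2}` for `P = diag(p)`. -/
noncomputable def pInvSqrt {n : ℕ} (p : Fin n → ℝ) : Matrix (Fin n) (Fin n) ℝ :=
  Matrix.diagonal fun i => (Real.sqrt (p i))⁻¹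

/-- `P_Ω^{-1/2}`, the diagonal matrix with entries `(p ω_i)^{-1/2}`. -/
noncomputable def pOmInvSqrt {n m : ℕ} (p : Fin n → ℝ) (ω : Fin m → Fin n) :
    Matrix (Fin m) (Fin m) ℝ :=
  Matrix.diagonal fun i => (Real.sqrt (p (ω i)))⁻¹

/-! The residual of `x + z₀` vanishes, so it minimizes the residual norm. Its error is
`z₀` itself, and `P_Ω^{-1/2} M z₀ = M P^{-1/2} z₀`, whose norm the upper RIP bound
controls by `√(m(1+δ)) ‖z₀‖₂`. -/

lemma norm2_nonneg {d : ℕ} (v : Fin d → ℝ) : 0 ≤ norm2 v :=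
  Real.sqrt_nonneg _

lemma norm2_zero {d : ℕ} : norm2 (0 : Fin d → ℝ) = 0 := by
  simp [norm2]

lemma pOmInvSqrt_mul_sampMat {n m : ℕ} (p : Fin n → ℝ) (ω : Fin m → Fin n) :
    pOmInvSqrt p ω * sampMat ω = sampMat ω * pInvSqrt p := by
  ext i j
  by_cases h : j = ω i
  · subst h
    simp [pOmInvSqrt, pInvSqrt, sampMat]
  · simp [pOmInvSqrt, pInvSqrt, sampMat, h]

lemma inv_sqrt_mul_le_of_inv_mul_sq_le {a b c r : ℝ} (hc : 0 < c) (hr : 0 ≤ r)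
    (h : 1 / c * a ^ 2 ≤ b * r ^ 2) : 1 / √(c * b) * a ≤ r := by
  have hsq : a ^ 2 ≤ c * b * r ^ 2 := by
    rw [one_div, inv_mul_le_iff₀ hc] at h
    linarith
  have hle : a ≤ √(c * b) * r := by
    calc a ≤ √(c * b * r ^ 2) := Real.le_sqrt_of_sq_le hsq
      _ = √(c * b) * r := by rw [Real.sqrt_mul' _ (sq_nonneg r), Real.sqrt_sq hr]
  rw [one_div]
  exact inv_mul_le_of_le_mul₀ (Real.sqrt_nonneg _) hr hle

theorem standard_decoder_lower_bound_general (n k m : ℕ) (hm : 0 < m)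
    (Uk : Matrix (Fin n) (Fin k) ℝ)
    (p : Fin n → ℝ)
    (ω : Fin m → Fin n) (δ : ℝ)
    (hRIP : ∀ x : Fin n → ℝ, (∃ α : Fin k → ℝ, x = Uk.mulVec α) →
      (1 / m) * norm2 ((sampMat ω * pInvSqrt p).mulVec x) ^ 2 ≤ (1 + δ) * norm2 x ^ 2)
    (x : Fin n → ℝ)
    (z₀ : Fin n → ℝ) (hz₀ : ∃ α : Fin k → ℝ, z₀ = Uk.mulVec α) :
    (∀ z : Fin n → ℝ, (∃ α : Fin k → ℝ, z = Uk.mulVec α) →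
      norm2 ((pOmInvSqrt p ω).mulVec
          ((sampMat ω).mulVec (x + z₀) - ((sampMat ω).mulVec x + (sampMat ω).mulVec z₀)))
        ≤ norm2 ((pOmInvSqrt p ω).mulVec
          ((sampMat ω).mulVec z - ((sampMat ω).mulVec x + (sampMat ω).mulVec z₀)))) ∧
    (1 / Real.sqrt (m * (1 + δ))) * norm2 ((pOmInvSqrt p ω).mulVec ((sampMat ω).mulVec z₀))
      ≤ norm2 ((x + z₀) - x) := by
  constructor
  · intro z _
    rw [mulVec_add, sub_self, mulVec_zero, norm2_zero]
    exact norm2_nonneg _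
  · rw [add_sub_cancel_left, mulVec_mulVec, pOmInvSqrt_mul_sampMat]
    exact inv_sqrt_mul_le_of_inv_mul_sq_le (Nat.cast_pos.mpr hm) (norm2_nonneg z₀)
      (hRIP z₀ hz₀)

/-- Standard decoder, lower bound for a worst-case noise: under the upper RIP bound,
for `w₀ := M z₀` with `z₀ ∈ span(U_k)` and `y := Mx + w₀`, the vector `x* := x + z₀` is
a minimizer of `‖P_Ω^{-1/2}(Mz - y)‖₂` over `span(U_k)` and
`‖x* - x‖₂ ≥ (1/√(m(1+δ)))‖P_Ω^{-1/2}w₀‖₂`. -/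
theorem standard_decoder_lower_bound (n k m : ℕ) (hk : 0 < k) (hkn : k ≤ n) (hm : 0 < m)
    (Uk : Matrix (Fin n) (Fin k) ℝ) (hU : Uk.transpose * Uk = 1)
    (p : Fin n → ℝ) (hp : ∀ i, 0 < p i) (hpsum : ∑ i, p i = 1)
    (ω : Fin m → Fin n) (δ : ℝ) (hδ0 : 0 < δ) (hδ1 : δ < 1)
    (hRIP : ∀ x : Fin n → ℝ, (∃ α : Fin k → ℝ, x = Uk.mulVec α) →
      (1 / m) * norm2 ((sampMat ω * pInvSqrt p).mulVec x) ^ 2 ≤ (1 + δ) * norm2 x ^ 2)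
    (x : Fin n → ℝ) (hx : ∃ α : Fin k → ℝ, x = Uk.mulVec α)
    (z₀ : Fin n → ℝ) (hz₀ : ∃ α : Fin k → ℝ, z₀ = Uk.mulVec α) :
    (∀ z : Fin n → ℝ, (∃ α : Fin k → ℝ, z = Uk.mulVec α) →
      norm2 ((pOmInvSqrt p ω).mulVec
          ((sampMat ω).mulVec (x + z₀) - ((sampMat ω).mulVec x + (sampMat ω).mulVec z₀)))
        ≤ norm2 ((pOmInvSqrt p ω).mulVec
          ((sampMat ω).mulVec z - ((sampMat ω).mulVec x + (sampMat ω).mulVec z₀)))) ∧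
    (1 / Real.sqrt (m * (1 + δ))) * norm2 ((pOmInvSqrt p ω).mulVec ((sampMat ω).mulVec z₀))
      ≤ norm2 ((x + z₀) - x) :=
  standard_decoder_lower_bound_general n k m hm Uk p ω δ hRIP x z₀ hz₀
end

section
/- (Efficient decoder, out-of-span component bound.) Let g: ℝ → ℝ be nonnegative and nondecreasing on [0,∞) with g(λ_{k+1}) > 0, and let γ > 0. For every x ∈ span(U_k) and w ∈ ℝ^m, let x* be a minimizer over z ∈ ℝ^n of ‖P_Ω^{−1/2}(M z − y)‖₂² + γ zᵀ g(L) z with y = M x + w, and set β* := (I − U_k U_kᵀ) x*. Then ‖β*‖₂ ≤ (1/√(γ g(λ_{k+1})))‖P_Ω^{−1/2} w‖₂ + √(g(λ_k)/g(λ_{k+1}))‖x‖₂. -/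
open Matrix

/-- The matrix of the first `k` columns of `U`. -/
def firstCols {n k : ℕ} (hkn : k ≤ n) (U : Matrix (Fin n) (Fin n) ℝ) :
    Matrix (Fin n) (Fin k) ℝ :=
  Matrix.of fun i j => U i (Fin.castLE hkn j)

/-- `g(L) = U diag(g(λ_1),…,g(λ_n)) Uᵀ` for `L = U diag(λ) Uᵀ`. -/
noncomputable def matFun {n : ℕ} (U : Matrix (Fin n) (Fin n) ℝ) (lam : Fin n → ℝ)
    (g : ℝ → ℝ) : Matrix (Fin n) (Fin n) ℝ :=
  U * Matrix.diagonal (fun i => g (lam i)) * U.transpose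

/-!
In the eigenbasis the regulariser is `zᵀ g(L) z = ∑ᵢ g(λᵢ) (Uᵀz)ᵢ²`. Comparing the objective at
`x*` with its value at `x`, where the data term is `‖P_Ω^{-1/2} w‖²`, gives
`γ x*ᵀ g(L) x* ≤ ‖P_Ω^{-1/2} w‖² + γ xᵀ g(L) x`. Since `g ∘ λ` is monotone, the left side is at
least `γ g(λ_{k+1}) ‖β*‖²`, because `β*` consists of the coordinates of `Uᵀx*` beyond `k`, and
`xᵀ g(L) x ≤ g(λ_k) ‖x‖²`, because `x ∈ span(U_k)`. Solving for `‖β*‖` and using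
`√(a + b) ≤ √a + √b` gives the bound.
-/

open Finset

lemma norm2_sq {d : ℕ} (v : Fin d → ℝ) : norm2 v ^ 2 = ∑ j, v j ^ 2 :=
  Real.sq_sqrt (sum_nonneg fun j _ => sq_nonneg (v j))

lemma norm2_neg {d : ℕ} (v : Fin d → ℝ) : norm2 (-v) = norm2 v := by
  simp [norm2]

lemma norm2_transpose_mulVec {n : ℕ} {U : Matrix (Fin n) (Fin n) ℝ} (hU : U * Uᵀ = 1)
    (v : Fin n → ℝ) : norm2 (Uᵀ *ᵥ v) = norm2 v := by
  have h : Uᵀ *ᵥ v ⬝ᵥ Uᵀ *ᵥ v = v ⬝ᵥ v := by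
    rw [dotProduct_mulVec, ← mulVec_transpose, mulVec_mulVec, transpose_transpose, hU,
      one_mulVec]
  simpa only [norm2, dotProduct, sq] using congrArg Real.sqrt h

lemma dotProduct_matFun_mulVec {n : ℕ} (U : Matrix (Fin n) (Fin n) ℝ) (lam : Fin n → ℝ)
    (g : ℝ → ℝ) (z : Fin n → ℝ) :
    z ⬝ᵥ matFun U lam g *ᵥ z = ∑ i, g (lam i) * (Uᵀ *ᵥ z) i ^ 2 := by
  rw [matFun, ← mulVec_mulVec, ← mulVec_mulVec, dotProduct_mulVec, ← mulVec_transpose]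
  simp only [dotProduct, mulVec_diagonal, sq]
  exact sum_congr rfl fun i _ => by ring

section FirstColumns

variable {n k : ℕ} (hkn : k ≤ n) {U : Matrix (Fin n) (Fin n) ℝ}

lemma transpose_mulVec_firstCols_mulVec (hU : Uᵀ * U = 1) (α : Fin k → ℝ) (i : Fin n) :
    (Uᵀ *ᵥ (firstCols hkn U *ᵥ α)) i = if h : (i : ℕ) < k then α ⟨i, h⟩ else 0 := by
  have hcols : Uᵀ * firstCols hkn U
      = (1 : Matrix (Fin n) (Fin n) ℝ).submatrix id (Fin.castLE hkn) := by
    -- `firstCols hkn U` is definitionally `U.submatrix id (Fin.castLE hkn)`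
    rw [← hU]; rfl
  rw [mulVec_mulVec, hcols]
  split_ifs with h
  · obtain ⟨j, rfl⟩ : ∃ j, i = Fin.castLE hkn j := ⟨⟨i, h⟩, rfl⟩
    simp [mulVec, dotProduct, Matrix.one_apply]
  · simp only [mulVec, dotProduct]
    refine sum_eq_zero fun j _ => ?_
    simp only [submatrix_apply, id, one_apply]
    rw [if_neg (by rintro rfl; exact h j.isLt), zero_mul]

lemma transpose_mulVec_firstCols_projection (hU : Uᵀ * U = 1) (v : Fin n → ℝ) (i : Fin n) :
    (Uᵀ *ᵥ ((firstCols hkn U * (firstCols hkn U)ᵀ) *ᵥ v)) i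
      = if (i : ℕ) < k then (Uᵀ *ᵥ v) i else 0 := by
  rw [← mulVec_mulVec, transpose_mulVec_firstCols_mulVec hkn hU]
  split_ifs <;> rfl

lemma norm2_sub_firstCols_projection_sq (hU : Uᵀ * U = 1) (v : Fin n → ℝ) :
    norm2 (v - (firstCols hkn U * (firstCols hkn U)ᵀ) *ᵥ v) ^ 2
      = ∑ i : Fin n with k ≤ i.val, (Uᵀ *ᵥ v) i ^ 2 := by
  rw [← norm2_transpose_mulVec (mul_eq_one_comm.mp hU), norm2_sq, sum_filter]
  refine sum_congr rfl fun i _ => ?_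
  rw [mulVec_sub, Pi.sub_apply, transpose_mulVec_firstCols_projection hkn hU]
  by_cases hi : (i : ℕ) < k
  · rw [if_pos hi, if_neg (by omega), sub_self, sq, mul_zero]
  · rw [if_neg hi, if_pos (by omega), sub_zero]

end FirstColumns

lemma mul_sum_le_sum_mul_of_le {ι : Type*} [Fintype ι] {s : Finset ι} {a f : ι → ℝ} {b : ℝ}
    (hb : ∀ i ∈ s, b ≤ a i) (ha : ∀ i, 0 ≤ a i) (hf : ∀ i, 0 ≤ f i) :
    b * ∑ i ∈ s, f i ≤ ∑ i, a i * f i :=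
  calc b * ∑ i ∈ s, f i
      ≤ ∑ i ∈ s, a i * f i := by
        rw [mul_sum]
        exact sum_le_sum fun i hi => mul_le_mul_of_nonneg_right (hb i hi) (hf i)
    _ ≤ ∑ i, a i * f i :=
        sum_le_sum_of_subset_of_nonneg (subset_univ s) fun i _ _ => mul_nonneg (ha i) (hf i)

lemma sum_mul_le_mul_sum_of_le {ι : Type*} [Fintype ι] {a f : ι → ℝ} {b : ℝ}
    (hb : ∀ i, f i ≠ 0 → a i ≤ b) (hf : ∀ i, 0 ≤ f i) :
    ∑ i, a i * f i ≤ b * ∑ i, f i := by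
  rw [mul_sum]
  refine sum_le_sum fun i _ => ?_
  by_cases hfi : f i = 0
  · simp [hfi]
  · exact mul_le_mul_of_nonneg_right (hb i hfi) (hf i)

lemma regularizer_le_of_forall_le {m n : ℕ} {A : Matrix (Fin m) (Fin m) ℝ}
    {B : Matrix (Fin m) (Fin n) ℝ} {R : (Fin n → ℝ) → ℝ} {γ : ℝ} {x xstar : Fin n → ℝ}
    {w : Fin m → ℝ}
    (hmin : ∀ z, norm2 (A *ᵥ (B *ᵥ xstar - (B *ᵥ x + w))) ^ 2 + γ * R xstar
      ≤ norm2 (A *ᵥ (B *ᵥ z - (B *ᵥ x + w))) ^ 2 + γ * R z) :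
    γ * R xstar ≤ norm2 (A *ᵥ w) ^ 2 + γ * R x := by
  have h := hmin x
  rw [sub_add_cancel_left, mulVec_neg, norm2_neg] at h
  linarith [sq_nonneg (norm2 (A *ᵥ (B *ᵥ xstar - (B *ᵥ x + w))))]

lemma le_of_mul_sq_le {γ g₀ g₁ t b c : ℝ} (hγ : 0 < γ) (hg₀ : 0 ≤ g₀) (hg₁ : 0 < g₁)
    (ht : 0 ≤ t) (hb : 0 ≤ b) (hc : 0 ≤ c)
    (h : γ * (g₁ * t ^ 2) ≤ b ^ 2 + γ * (g₀ * c ^ 2)) :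
    t ≤ 1 / √(γ * g₁) * b + √(g₀ / g₁) * c := by
  have hγg₁ : 0 < γ * g₁ := mul_pos hγ hg₁
  have hsq : t ^ 2 ≤ (1 / √(γ * g₁) * b) ^ 2 + (√(g₀ / g₁) * c) ^ 2 := by
    have hrhs : 1 / (γ * g₁) * b ^ 2 + g₀ / g₁ * c ^ 2
        = (b ^ 2 + γ * (g₀ * c ^ 2)) / (γ * g₁) := by
      field_simp
    rw [mul_pow, mul_pow, div_pow, Real.sq_sqrt hγg₁.le, Real.sq_sqrt (by positivity),
      one_pow, hrhs, le_div_iff₀ hγg₁]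
    linarith
  rw [← pow_le_pow_iff_left₀ ht (by positivity) two_ne_zero]
  nlinarith [mul_nonneg (by positivity : 0 ≤ 1 / √(γ * g₁) * b)
    (by positivity : 0 ≤ √(g₀ / g₁) * c)]

theorem efficient_decoder_beta_bound_general (n k m : ℕ) (hkn : k < n)
    (U : Matrix (Fin n) (Fin n) ℝ) (hU : U.transpose * U = 1)
    (lam : Fin n → ℝ) (hmono : Monotone lam) (hnonneg : ∀ i, 0 ≤ lam i)
    (ik ik1 : Fin n) (hik : (ik : ℕ) = k - 1) (hik1 : (ik1 : ℕ) = k)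
    (p : Fin n → ℝ)
    (ω : Fin m → Fin n)
    (g : ℝ → ℝ) (hgnn : ∀ t, 0 ≤ t → 0 ≤ g t)
    (hgmono : ∀ s t, 0 ≤ s → s ≤ t → g s ≤ g t)
    (hgk1 : 0 < g (lam ik1))
    (γ : ℝ) (hγ : 0 < γ)
    (x : Fin n → ℝ) (hx : ∃ α : Fin k → ℝ, x = (firstCols hkn.le U).mulVec α)
    (w : Fin m → ℝ)
    (xstar : Fin n → ℝ)
    (hmin : ∀ z : Fin n → ℝ,
      norm2 ((pOmInvSqrt p ω).mulVec
            ((sampMat ω).mulVec xstar - ((sampMat ω).mulVec x + w))) ^ 2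
          + γ * (xstar ⬝ᵥ (matFun U lam g).mulVec xstar)
        ≤ norm2 ((pOmInvSqrt p ω).mulVec
            ((sampMat ω).mulVec z - ((sampMat ω).mulVec x + w))) ^ 2
          + γ * (z ⬝ᵥ (matFun U lam g).mulVec z)) :
    norm2 (xstar - (firstCols hkn.le U * (firstCols hkn.le U).transpose).mulVec xstar)
      ≤ (1 / Real.sqrt (γ * g (lam ik1))) * norm2 ((pOmInvSqrt p ω).mulVec w)
        + Real.sqrt (g (lam ik) / g (lam ik1)) * norm2 x := by
  have hgl_mono : ∀ i j, i ≤ j → g (lam i) ≤ g (lam j) :=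
    fun i j hij => hgmono _ _ (hnonneg i) (hmono hij)
  have hfit := regularizer_le_of_forall_le (R := fun z => z ⬝ᵥ matFun U lam g *ᵥ z) hmin
  have hlow : g (lam ik1)
      * norm2 (xstar - (firstCols hkn.le U * (firstCols hkn.le U)ᵀ) *ᵥ xstar) ^ 2
      ≤ xstar ⬝ᵥ matFun U lam g *ᵥ xstar := by
    rw [norm2_sub_firstCols_projection_sq hkn.le hU, dotProduct_matFun_mulVec]
    exact mul_sum_le_sum_mul_of_le
      (fun i hi => hgl_mono _ _ (Fin.le_def.2 (hik1 ▸ (mem_filter.1 hi).2)))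
      (fun i => hgnn _ (hnonneg i)) (fun i => sq_nonneg _)
  have hup : x ⬝ᵥ matFun U lam g *ᵥ x ≤ g (lam ik) * norm2 x ^ 2 := by
    obtain ⟨α, rfl⟩ := hx
    rw [dotProduct_matFun_mulVec, ← norm2_transpose_mulVec (mul_eq_one_comm.mp hU), norm2_sq]
    refine sum_mul_le_mul_sum_of_le (fun i hi => hgl_mono _ _ (Fin.le_def.2 ?_))
      (fun i => sq_nonneg _)
    rw [transpose_mulVec_firstCols_mulVec hkn.le hU] at hi
    split_ifs at hi with h
    · omega
    · simp at hi
  refine le_of_mul_sq_le hγ (hgnn _ (hnonneg ik)) hgk1 (Real.sqrt_nonneg _) (Real.sqrt_nonneg _)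
    (Real.sqrt_nonneg _) ?_
  linarith [mul_le_mul_of_nonneg_left hlow hγ.le, mul_le_mul_of_nonneg_left hup hγ.le]

/-- Efficient decoder, bound on the out-of-span component `β* = (I - U_k U_kᵀ) x*`. -/
theorem efficient_decoder_beta_bound (n k m : ℕ) (hk : 0 < k) (hkn : k < n) (hm : 0 < m)
    (U : Matrix (Fin n) (Fin n) ℝ) (hU : U.transpose * U = 1)
    (lam : Fin n → ℝ) (hmono : Monotone lam) (hnonneg : ∀ i, 0 ≤ lam i)
    (ik ik1 : Fin n) (hik : (ik : ℕ) = k - 1) (hik1 : (ik1 : ℕ) = k)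
    (p : Fin n → ℝ) (hp : ∀ i, 0 < p i) (hpsum : ∑ i, p i = 1)
    (ω : Fin m → Fin n)
    (g : ℝ → ℝ) (hgnn : ∀ t, 0 ≤ t → 0 ≤ g t)
    (hgmono : ∀ s t, 0 ≤ s → s ≤ t → g s ≤ g t)
    (hgk1 : 0 < g (lam ik1))
    (γ : ℝ) (hγ : 0 < γ)
    (x : Fin n → ℝ) (hx : ∃ α : Fin k → ℝ, x = (firstCols hkn.le U).mulVec α)
    (w : Fin m → ℝ)
    (xstar : Fin n → ℝ)
    (hmin : ∀ z : Fin n → ℝ,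
      norm2 ((pOmInvSqrt p ω).mulVec
            ((sampMat ω).mulVec xstar - ((sampMat ω).mulVec x + w))) ^ 2
          + γ * (xstar ⬝ᵥ (matFun U lam g).mulVec xstar)
        ≤ norm2 ((pOmInvSqrt p ω).mulVec
            ((sampMat ω).mulVec z - ((sampMat ω).mulVec x + w))) ^ 2
          + γ * (z ⬝ᵥ (matFun U lam g).mulVec z)) :
    norm2 (xstar - (firstCols hkn.le U * (firstCols hkn.le U).transpose).mulVec xstar)
      ≤ (1 / Real.sqrt (γ * g (lam ik1))) * norm2 ((pOmInvSqrt p ω).mulVec w)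
        + Real.sqrt (g (lam ik) / g (lam ik1)) * norm2 x :=
  efficient_decoder_beta_bound_general n k m hkn U hU lam hmono hnonneg ik ik1 hik hik1 p ω g hgnn
    hgmono hgk1 γ hγ x hx w xstar hmin
end

section
/- (Noiseless exact recovery by the efficient decoder.) Assume the lower RIP bound (1−δ)‖x‖₂² ≤ (1/m)‖M P^{−1/2} x‖₂² for all x ∈ span(U_k), for some δ ∈ (0,1). Let g: ℝ → ℝ be nonnegative and nondecreasing on [0,∞) with g(λ_k) = 0 and g(λ_{k+1}) > 0, and let γ > 0. Then for every x ∈ span(U_k), any minimizer x* over z ∈ ℝ^n of ‖P_Ω^{−1/2}(M z − M x)‖₂² + γ zᵀ g(L) z satisfies x* = x. -/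
open Matrix

/-! The regulariser `zᵀ g(L) z = ∑ᵢ g(λᵢ) (Uᵀz)ᵢ²` is nonnegative, and since `g(λᵢ)` vanishes
exactly for the first `k` indices, its zero set is `span(U_k)`. The objective vanishes at `x`, so
at a minimiser both of its terms vanish: `x* ∈ span(U_k)` and `P_Ω^{-1/2} M (x* - x) = 0`. As
`P_Ω^{-1/2} M = M P^{-1/2}`, the RIP lower bound applied to `x* - x ∈ span(U_k)` with `δ < 1`
forces `x* = x`. -/

theorem norm2_eq_zero_iff {d : ℕ} {x : Fin d → ℝ} : norm2 x = 0 ↔ x = 0 := by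
  rw [norm2, Real.sqrt_eq_zero (Finset.sum_nonneg fun j _ => sq_nonneg _),
    Fintype.sum_eq_zero_iff_of_nonneg fun j => sq_nonneg _]
  simp [funext_iff]

theorem sampMat_mul_pInvSqrt {n m : ℕ} (p : Fin n → ℝ) (ω : Fin m → Fin n) :
    sampMat ω * pInvSqrt p = pOmInvSqrt p ω * sampMat ω := by
  ext i j
  by_cases h : j = ω i <;> simp [sampMat, pInvSqrt, pOmInvSqrt, h]

theorem dotProduct_mul_diagonal_mul_transpose_mulVec {ι R : Type*} [Fintype ι] [DecidableEq ι]
    [CommSemiring R] (U : Matrix ι ι R) (d : ι → R) (z : ι → R) :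
    z ⬝ᵥ (U * diagonal d * Uᵀ) *ᵥ z = ∑ i, d i * (Uᵀ *ᵥ z) i ^ 2 := by
  rw [← mulVec_mulVec, ← mulVec_mulVec, dotProduct_mulVec, ← mulVec_transpose]
  simp only [dotProduct, mulVec_diagonal]
  exact Finset.sum_congr rfl fun i _ => by ring

theorem dotProduct_mul_diagonal_mul_transpose_mulVec_eq_zero_iff {ι : Type*} [Fintype ι]
    [DecidableEq ι] (U : Matrix ι ι ℝ) {d : ι → ℝ} (hd : ∀ i, 0 ≤ d i) (z : ι → ℝ) :
    z ⬝ᵥ (U * diagonal d * Uᵀ) *ᵥ z = 0 ↔ ∀ i, 0 < d i → (Uᵀ *ᵥ z) i = 0 := by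
  rw [dotProduct_mul_diagonal_mul_transpose_mulVec,
    Fintype.sum_eq_zero_iff_of_nonneg fun i => mul_nonneg (hd i) (sq_nonneg _)]
  simp only [funext_iff, Pi.zero_apply, mul_eq_zero, pow_eq_zero_iff two_ne_zero]
  exact forall_congr' fun i =>
    ⟨fun h hi => h.resolve_left hi.ne', fun h => (hd i).eq_or_lt.imp Eq.symm h⟩

theorem dotProduct_mul_diagonal_mul_transpose_mulVec_nonneg {ι : Type*} [Fintype ι]
    [DecidableEq ι] (U : Matrix ι ι ℝ) {d : ι → ℝ} (hd : ∀ i, 0 ≤ d i) (z : ι → ℝ) :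
    0 ≤ z ⬝ᵥ (U * diagonal d * Uᵀ) *ᵥ z := by
  rw [dotProduct_mul_diagonal_mul_transpose_mulVec]
  exact Finset.sum_nonneg fun i _ => mul_nonneg (hd i) (sq_nonneg _)

theorem firstCols_mulVec {n k : ℕ} (hkn : k ≤ n) (U : Matrix (Fin n) (Fin n) ℝ)
    (α : Fin k → ℝ) :
    firstCols hkn U *ᵥ α = U *ᵥ Function.extend (Fin.castLE hkn) α 0 := by
  ext i
  refine Fintype.sum_of_injective _ (Fin.castLE_injective hkn) _ _ (fun j hj => ?_)
    fun l => ?_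
  · simp [Function.extend_apply' _ _ _ hj]
  · simp [firstCols, (Fin.castLE_injective hkn).extend_apply]

theorem exists_firstCols_mulVec_iff {n k : ℕ} (hkn : k ≤ n) {U : Matrix (Fin n) (Fin n) ℝ}
    (hU : Uᵀ * U = 1) (z : Fin n → ℝ) :
    (∃ α, z = firstCols hkn U *ᵥ α) ↔ ∀ i : Fin n, k ≤ (i : ℕ) → (Uᵀ *ᵥ z) i = 0 := by
  have hrange (i : Fin n) : (∃ l, Fin.castLE hkn l = i) ↔ (i : ℕ) < k :=
    ⟨by rintro ⟨l, rfl⟩; exact l.isLt, fun hi => ⟨⟨i, hi⟩, rfl⟩⟩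
  constructor
  · rintro ⟨α, rfl⟩ i hi
    rw [firstCols_mulVec, mulVec_mulVec, hU, one_mulVec,
      Function.extend_apply' _ _ _ (by rw [hrange]; omega), Pi.zero_apply]
  · intro h
    refine ⟨(Uᵀ *ᵥ z) ∘ Fin.castLE hkn, ?_⟩
    have hextend :
        Function.extend (Fin.castLE hkn) ((Uᵀ *ᵥ z) ∘ Fin.castLE hkn) 0 = Uᵀ *ᵥ z := by
      ext i
      by_cases hi : (i : ℕ) < k
      · obtain ⟨l, rfl⟩ := (hrange i).2 hi
        exact (Fin.castLE_injective hkn).extend_apply _ _ l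
      · rw [Function.extend_apply' _ _ _ (by rwa [hrange]), h i (by omega), Pi.zero_apply]
    rw [firstCols_mulVec, hextend, mulVec_mulVec, mul_eq_one_comm.mp hU, one_mulVec]

theorem pos_iff_le_of_monotone {n k : ℕ} {c : Fin n → ℝ} (hc : Monotone c) {ik ik1 : Fin n}
    (hik : (ik : ℕ) = k - 1) (hik1 : (ik1 : ℕ) = k) (hck : c ik ≤ 0) (hck1 : 0 < c ik1)
    (i : Fin n) : 0 < c i ↔ k ≤ (i : ℕ) := by
  constructor
  · intro hi
    by_contra! hlt
    have : c i ≤ c ik := hc (Fin.le_def.2 (by omega))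
    linarith
  · intro hi
    exact hck1.trans_le (hc (Fin.le_def.2 (by omega)))

theorem efficient_decoder_exact_recovery_general (n k m : ℕ) (hkn : k < n)
    (U : Matrix (Fin n) (Fin n) ℝ) (hU : U.transpose * U = 1)
    (lam : Fin n → ℝ) (hmono : Monotone lam) (hnonneg : ∀ i, 0 ≤ lam i)
    (ik ik1 : Fin n) (hik : (ik : ℕ) = k - 1) (hik1 : (ik1 : ℕ) = k)
    (p : Fin n → ℝ)
    (ω : Fin m → Fin n) (δ : ℝ) (hδ1 : δ < 1)
    (hRIP : ∀ x : Fin n → ℝ,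
      (∃ α : Fin k → ℝ, x = (firstCols hkn.le U).mulVec α) →
      (1 - δ) * norm2 x ^ 2 ≤ (1 / m) * norm2 ((sampMat ω * pInvSqrt p).mulVec x) ^ 2)
    (g : ℝ → ℝ) (hgnn : ∀ t, 0 ≤ t → 0 ≤ g t)
    (hgmono : ∀ s t, 0 ≤ s → s ≤ t → g s ≤ g t)
    (hgk : g (lam ik) = 0) (hgk1 : 0 < g (lam ik1))
    (γ : ℝ) (hγ : 0 < γ)
    (x : Fin n → ℝ) (hx : ∃ α : Fin k → ℝ, x = (firstCols hkn.le U).mulVec α)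
    (xstar : Fin n → ℝ)
    (hmin : ∀ z : Fin n → ℝ,
      norm2 ((pOmInvSqrt p ω).mulVec
            ((sampMat ω).mulVec xstar - (sampMat ω).mulVec x)) ^ 2
          + γ * (xstar ⬝ᵥ (matFun U lam g).mulVec xstar)
        ≤ norm2 ((pOmInvSqrt p ω).mulVec
            ((sampMat ω).mulVec z - (sampMat ω).mulVec x)) ^ 2
          + γ * (z ⬝ᵥ (matFun U lam g).mulVec z)) :
    xstar = x := by
  have hg_nonneg (i : Fin n) : 0 ≤ g (lam i) := hgnn _ (hnonneg i)
  have hgap := pos_iff_le_of_monotone (c := fun i => g (lam i))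
    (fun i j hij => hgmono _ _ (hnonneg i) (hmono hij)) hik hik1 hgk.le hgk1
  have hker (z : Fin n → ℝ) :
      z ⬝ᵥ matFun U lam g *ᵥ z = 0 ↔ ∃ α, z = firstCols hkn.le U *ᵥ α := by
    rw [matFun, dotProduct_mul_diagonal_mul_transpose_mulVec_eq_zero_iff U hg_nonneg,
      exists_firstCols_mulVec_iff hkn.le hU]
    simp only [hgap]
  have hreg_nonneg : 0 ≤ xstar ⬝ᵥ matFun U lam g *ᵥ xstar :=
    dotProduct_mul_diagonal_mul_transpose_mulVec_nonneg U hg_nonneg xstar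
  have hobj_x := hmin x
  rw [sub_self, mulVec_zero, (hker x).2 hx, norm2_eq_zero_iff.2 rfl] at hobj_x
  have hdata : norm2 (pOmInvSqrt p ω *ᵥ (sampMat ω *ᵥ xstar - sampMat ω *ᵥ x)) = 0 := by
    nlinarith
  obtain ⟨β, hβ⟩ := (hker xstar).1 (by nlinarith)
  obtain ⟨α, hα⟩ := hx
  have hrip := hRIP (xstar - x) ⟨β - α, by rw [hβ, hα, mulVec_sub]⟩
  rw [sampMat_mul_pInvSqrt, ← mulVec_mulVec, mulVec_sub, hdata] at hrip
  have hsq : norm2 (xstar - x) ^ 2 = 0 := by nlinarith [sq_nonneg (norm2 (xstar - x))]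
  exact sub_eq_zero.1 (norm2_eq_zero_iff.1 (pow_eq_zero_iff two_ne_zero |>.1 hsq))

/-- Noiseless exact recovery by the efficient decoder: if `g(λ_k) = 0` and
`g(λ_{k+1}) > 0`, any minimizer of the regularised objective with noiseless
measurements `y = Mx` equals `x`. -/
theorem efficient_decoder_exact_recovery (n k m : ℕ) (hk : 0 < k) (hkn : k < n)
    (hm : 0 < m)
    (U : Matrix (Fin n) (Fin n) ℝ) (hU : U.transpose * U = 1)
    (lam : Fin n → ℝ) (hmono : Monotone lam) (hnonneg : ∀ i, 0 ≤ lam i)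
    (ik ik1 : Fin n) (hik : (ik : ℕ) = k - 1) (hik1 : (ik1 : ℕ) = k)
    (p : Fin n → ℝ) (hp : ∀ i, 0 < p i) (hpsum : ∑ i, p i = 1)
    (ω : Fin m → Fin n) (δ : ℝ) (hδ0 : 0 < δ) (hδ1 : δ < 1)
    (hRIP : ∀ x : Fin n → ℝ,
      (∃ α : Fin k → ℝ, x = (firstCols hkn.le U).mulVec α) →
      (1 - δ) * norm2 x ^ 2 ≤ (1 / m) * norm2 ((sampMat ω * pInvSqrt p).mulVec x) ^ 2)
    (g : ℝ → ℝ) (hgnn : ∀ t, 0 ≤ t → 0 ≤ g t)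
    (hgmono : ∀ s t, 0 ≤ s → s ≤ t → g s ≤ g t)
    (hgk : g (lam ik) = 0) (hgk1 : 0 < g (lam ik1))
    (γ : ℝ) (hγ : 0 < γ)
    (x : Fin n → ℝ) (hx : ∃ α : Fin k → ℝ, x = (firstCols hkn.le U).mulVec α)
    (xstar : Fin n → ℝ)
    (hmin : ∀ z : Fin n → ℝ,
      norm2 ((pOmInvSqrt p ω).mulVec
            ((sampMat ω).mulVec xstar - (sampMat ω).mulVec x)) ^ 2
          + γ * (xstar ⬝ᵥ (matFun U lam g).mulVec xstar)
        ≤ norm2 ((pOmInvSqrt p ω).mulVec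
            ((sampMat ω).mulVec z - (sampMat ω).mulVec x)) ^ 2
          + γ * (z ⬝ᵥ (matFun U lam g).mulVec z)) :
    xstar = x :=
  efficient_decoder_exact_recovery_general n k m hkn U hU lam hmono hnonneg ik ik1 hik hik1 p ω δ
    hδ1 hRIP g hgnn hgmono hgk hgk1 γ hγ x hx xstar hmin
end

section
/- For every δ ∈ [0,1), one has e^{−δ}/(1−δ)^{1−δ} ≤ exp(−δ²/3). -/
/-! For `x = 1 - δ ∈ (0, 1]` we have `log x ≤ 0`, hence `sinh (log x) ≤ log x`, i.e.
`(x - x⁻¹) / 2 ≤ log x`. Multiplying by `x` gives `(1 - δ) log (1 - δ) ≥ -δ + δ² / 2`, which is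
the logarithm of the sharper bound `e^{-δ} / (1 - δ)^{1 - δ} ≤ e^{-δ² / 2}`. -/

open Real

lemma half_sub_inv_le_log {x : ℝ} (hx₀ : 0 < x) (hx₁ : x ≤ 1) : (x - x⁻¹) / 2 ≤ log x := by
  rw [← sinh_log hx₀]
  exact sinh_le_self_iff.2 (log_nonpos hx₀.le hx₁)

lemma sq_sub_one_div_two_le_mul_log {x : ℝ} (hx₀ : 0 < x) (hx₁ : x ≤ 1) :
    (x ^ 2 - 1) / 2 ≤ x * log x :=
  calc (x ^ 2 - 1) / 2 = x * ((x - x⁻¹) / 2) := by field_simp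
    _ ≤ x * log x := mul_le_mul_of_nonneg_left (half_sub_inv_le_log hx₀ hx₁) hx₀.le

lemma exp_neg_div_one_sub_rpow_le {δ : ℝ} (h₀ : 0 ≤ δ) (h₁ : δ < 1) :
    exp (-δ) / (1 - δ) ^ (1 - δ) ≤ exp (-δ ^ 2 / 2) := by
  have hx₀ : 0 < 1 - δ := by linarith
  have hlog := sq_sub_one_div_two_le_mul_log hx₀ (by linarith)
  rw [rpow_def_of_pos hx₀, ← exp_sub, exp_le_exp]
  nlinarith

/-- For every `δ ∈ [0,1)`, `e^{-δ}/(1-δ)^{1-δ} ≤ exp(-δ²/3)`. -/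
theorem chernoff_lower_bound_ineq (δ : ℝ) (h0 : 0 ≤ δ) (h1 : δ < 1) :
    Real.exp (-δ) / (1 - δ) ^ (1 - δ) ≤ Real.exp (-δ ^ 2 / 3) :=
  (exp_neg_div_one_sub_rpow_le h0 h1).trans <| exp_le_exp.2 <| by nlinarith [sq_nonneg δ]
end

section
/- For every δ ∈ [0,1], one has e^{δ}/(1+δ)^{1+δ} ≤ exp(−δ²/3). -/
/-! Taking logarithms, the claim is `δ + δ²/3 ≤ (1 + δ) log (1 + δ)`. The Padé bound
`log (1 + δ) ≥ 2δ/(δ + 2)` reduces it to a rational inequality whose two sides differ by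
`δ²(1 - δ)/(3(δ + 2)) ≥ 0`. -/

open Real

lemma add_sq_div_three_le_mul_log_one_add {δ : ℝ} (h0 : 0 ≤ δ) (h1 : δ ≤ 1) :
    δ + δ ^ 2 / 3 ≤ (1 + δ) * log (1 + δ) :=
  calc δ + δ ^ 2 / 3 ≤ (1 + δ) * (2 * δ / (δ + 2)) := by
        rw [mul_div_assoc', le_div_iff₀ (by linarith)]
        nlinarith [mul_nonneg (sq_nonneg δ) (sub_nonneg.2 h1)]
    _ ≤ (1 + δ) * log (1 + δ) :=
        mul_le_mul_of_nonneg_left (le_log_one_add_of_nonneg h0) (by linarith)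

/-- For every `δ ∈ [0,1]`, `e^{δ}/(1+δ)^{1+δ} ≤ exp(-δ²/3)`. -/
theorem chernoff_upper_bound_ineq (δ : ℝ) (h0 : 0 ≤ δ) (h1 : δ ≤ 1) :
    Real.exp δ / (1 + δ) ^ (1 + δ) ≤ Real.exp (-δ ^ 2 / 3) := by
  rw [rpow_def_of_pos (by linarith), div_le_iff₀ (exp_pos _), ← exp_add, exp_le_exp]
  linarith [add_sq_div_three_le_mul_log_one_add h0 h1]
end
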